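/- Consider the pure radiation fluid p̃(θ) = θ⁴/3 in 1+1 dimensions with ideal energy-momentum tensor T^{αβ} = θ³p̃'(θ)ψ^αψ^β + p̃(θ)g^{αβ}, g = diag(−1,+1), ψ^α = U^α/θ. Then the strict causality condition holds: for every future timelike or null covector T_β (T₀ < 0, T₀² ≥ T₁²), the 2×2 matrix (∂²(p̃(θ)ψ^β)/∂ψ_α∂ψ_γ · T_β) is negative definite at every state ψ in the open future cone Ψ = {ψ⁰ > |ψ¹|}. -/

import Mathlib

/-!
Write `q = ψ · ψ` for the Minkowski square and `ℓ(ψ) = T · ψ`; the potential is `ℓ q⁻² / 3`, and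
its second derivative along `v` is `(4/3) q⁻⁴ (6 ℓ(ψ) b² - 2 ℓ(v) b q - ℓ(ψ) c q)` with
`b = ψ · v`, `c = v · v`. In the coordinates `s = ψ · v`, `r = ψ⊥ · v` adapted to `ψ`
(`ψ⊥ = (ψ¹, ψ⁰)`) the bracket is the binary form `3 l s² + 2 M s r + l r²`, where `l = T · ψ < 0`
and `M = T · ψ⊥`. The identity `l² - M² = q (T₀² - T₁²) ≥ 0` makes its discriminant negative,
so the form is negative definite.
-/

open ContinuousLinearMap

theorem quadratic_form_neg {a m c s r : ℝ} (ha : a < 0) (hdisc : m ^ 2 < a * c)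
    (hsr : s ≠ 0 ∨ r ≠ 0) : a * s ^ 2 + 2 * m * s * r + c * r ^ 2 < 0 := by
  have hpos : 0 < a * (a * s ^ 2 + 2 * m * s * r + c * r ^ 2) := by
    rw [show a * (a * s ^ 2 + 2 * m * s * r + c * r ^ 2)
      = (a * s + m * r) ^ 2 + (a * c - m ^ 2) * r ^ 2 by ring]
    rcases eq_or_ne r 0 with rfl | hr
    · have hs : s ≠ 0 := hsr.resolve_right (not_not.2 rfl)
      simpa using pow_two_pos_of_ne_zero (mul_ne_zero ha.ne hs)
    · exact add_pos_of_nonneg_of_pos (sq_nonneg _) (mul_pos (sub_pos.2 hdisc) (by positivity))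
  exact neg_of_mul_pos_right hpos ha.le

/-- The Minkowski product with signature `(+, -)`, i.e. `-g` for the paper's `g = diag(-1, 1)`. -/
def minkowskiForm (y v : ℝ × ℝ) : ℝ := y.1 * v.1 - y.2 * v.2

theorem minkowskiForm_self_pos {x : ℝ × ℝ} (hx : |x.2| < x.1) : 0 < minkowskiForm x x := by
  have := mul_self_lt_mul_self (abs_nonneg x.2) hx
  rw [abs_mul_abs_self] at this
  exact sub_pos.2 this

theorem future_pairing_neg {T0 T1 : ℝ} (hT0 : T0 < 0) (hT : T1 ^ 2 ≤ T0 ^ 2) {x : ℝ × ℝ}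
    (hx : |x.2| < x.1) : x.1 * T0 + x.2 * T1 < 0 := by
  have hT1 : |T1| ≤ -T0 := by simpa [abs_of_neg hT0] using sq_le_sq.1 hT
  calc x.1 * T0 + x.2 * T1 ≤ x.1 * T0 + |x.2| * |T1| := by
        simpa only [abs_mul, add_le_add_iff_left] using le_abs_self (x.2 * T1)
    _ ≤ x.1 * T0 + |x.2| * -T0 := by gcongr
    _ < x.1 * T0 + x.1 * -T0 := by gcongr; linarith
    _ = 0 := by ring

theorem hasFDerivAt_minkowskiForm_self (y : ℝ × ℝ) :
    HasFDerivAt (fun x => minkowskiForm x x) ((2 * y.1) • fst ℝ ℝ ℝ - (2 * y.2) • snd ℝ ℝ ℝ) y :=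
  ((hasFDerivAt_fst.mul hasFDerivAt_fst).sub (hasFDerivAt_snd.mul hasFDerivAt_snd)).congr_fderiv
    (by ext <;> simp <;> ring)

theorem hasFDerivAt_minkowskiForm_left (y v : ℝ × ℝ) :
    HasFDerivAt (fun x => minkowskiForm x v) (v.1 • fst ℝ ℝ ℝ - v.2 • snd ℝ ℝ ℝ) y :=
  ((hasFDerivAt_fst.mul_const v.1).sub (hasFDerivAt_snd.mul_const v.2)).congr_fderiv
    (by ext <;> simp)

theorem hasFDerivAt_minkowskiForm_self_zpow {y : ℝ × ℝ} (hy : minkowskiForm y y ≠ 0) (n : ℤ) :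
    HasFDerivAt (fun x => minkowskiForm x x ^ n)
      ((2 * n * minkowskiForm y y ^ (n - 1)) • (y.1 • fst ℝ ℝ ℝ - y.2 • snd ℝ ℝ ℝ)) y :=
  ((hasDerivAt_zpow n _ (Or.inl hy)).comp_hasFDerivAt (f := fun x => minkowskiForm x x) y
    (hasFDerivAt_minkowskiForm_self y)).congr_fderiv (by ext <;> simp <;> ring)

/-- `p̃(θ) ψ^β T_β` for `p̃(θ) = θ⁴/3` and `θ = (ψ · ψ)^{-1/2}`, with `ℓ` the covector `T`. -/
noncomputable def radiationPotential (ℓ : ℝ × ℝ →L[ℝ] ℝ) (y : ℝ × ℝ) : ℝ :=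
  minkowskiForm y y ^ (-2 : ℤ) / 3 * ℓ y

theorem fderiv_radiationPotential_apply (ℓ : ℝ × ℝ →L[ℝ] ℝ) {y : ℝ × ℝ}
    (hy : minkowskiForm y y ≠ 0) (v : ℝ × ℝ) :
    fderiv ℝ (radiationPotential ℓ) y v = minkowskiForm y y ^ (-3 : ℤ) / 3 *
      (ℓ v * minkowskiForm y y - 4 * ℓ y * minkowskiForm y v) := by
  have h : HasFDerivAt (radiationPotential ℓ) _ y :=
    ((hasFDerivAt_minkowskiForm_self_zpow hy (-2)).mul_const 3⁻¹).mul ℓ.hasFDerivAt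
  have hpow : minkowskiForm y y ^ (-2 : ℤ) = minkowskiForm y y ^ (-3 : ℤ) * minkowskiForm y y := by
    rw [← zpow_add_one₀ hy]; norm_num
  rw [h.fderiv]
  simp only [add_apply, smul_apply, sub_apply, coe_fst', coe_snd', smul_eq_mul]
  push_cast
  rw [hpow]
  simp only [minkowskiForm]
  ring

theorem fderiv_fderiv_radiationPotential_apply (ℓ : ℝ × ℝ →L[ℝ] ℝ) {x : ℝ × ℝ}
    (hx : minkowskiForm x x ≠ 0) (v : ℝ × ℝ) :
    fderiv ℝ (fun y => fderiv ℝ (radiationPotential ℓ) y v) x v =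
      4 / 3 * minkowskiForm x x ^ (-4 : ℤ) * (6 * ℓ x * minkowskiForm x v ^ 2
        - 2 * ℓ v * minkowskiForm x v * minkowskiForm x x
        - ℓ x * minkowskiForm v v * minkowskiForm x x) := by
  have hfirst : (fun y => fderiv ℝ (radiationPotential ℓ) y v) =ᶠ[nhds x] fun y =>
      minkowskiForm y y ^ (-3 : ℤ) / 3 * (ℓ v * minkowskiForm y y - 4 * ℓ y * minkowskiForm y v) := by
    filter_upwards [(hasFDerivAt_minkowskiForm_self x).continuousAt.eventually_ne hx] with y hy
    exact fderiv_radiationPotential_apply ℓ hy v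
  have h : HasFDerivAt (fun y => minkowskiForm y y ^ (-3 : ℤ) / 3 *
      (ℓ v * minkowskiForm y y - 4 * ℓ y * minkowskiForm y v)) _ x :=
    ((hasFDerivAt_minkowskiForm_self_zpow hx (-3)).mul_const 3⁻¹).mul
      (((hasFDerivAt_minkowskiForm_self x).const_mul (ℓ v)).sub
        ((ℓ.hasFDerivAt.const_mul 4).mul (hasFDerivAt_minkowskiForm_left x v)))
  have hpow : minkowskiForm x x ^ (-3 : ℤ) = minkowskiForm x x ^ (-4 : ℤ) * minkowskiForm x x := by
    rw [← zpow_add_one₀ hx]; norm_num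
  rw [hfirst.fderiv_eq, h.fderiv]
  simp only [add_apply, smul_apply, sub_apply, coe_fst', coe_snd', smul_eq_mul]
  push_cast
  rw [hpow]
  simp only [minkowskiForm]
  ring

theorem radiation_hessian_form_neg {T0 T1 : ℝ} (hT0 : T0 < 0) (hT : T1 ^ 2 ≤ T0 ^ 2)
    {x v : ℝ × ℝ} (hx : |x.2| < x.1) (hv : v ≠ 0) :
    6 * (x.1 * T0 + x.2 * T1) * minkowskiForm x v ^ 2
      - 2 * (v.1 * T0 + v.2 * T1) * minkowskiForm x v * minkowskiForm x x
      - (x.1 * T0 + x.2 * T1) * minkowskiForm v v * minkowskiForm x x < 0 := by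
  have hq := minkowskiForm_self_pos hx
  have hl := future_pairing_neg hT0 hT hx
  set l := x.1 * T0 + x.2 * T1
  set q := minkowskiForm x x
  set s := minkowskiForm x v
  set M := x.2 * T0 + x.1 * T1
  set r := x.2 * v.1 - x.1 * v.2
  have hM : M ^ 2 ≤ l ^ 2 := by
    have : l ^ 2 - M ^ 2 = q * (T0 ^ 2 - T1 ^ 2) := by simp only [l, M, q, minkowskiForm]; ring
    nlinarith
  have hsr : s ≠ 0 ∨ r ≠ 0 := by
    by_contra! h
    have h1 : q * v.1 = x.1 * s - x.2 * r := by simp only [q, s, r, minkowskiForm]; ring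
    have h2 : q * v.2 = x.2 * s - x.1 * r := by simp only [q, s, r, minkowskiForm]; ring
    simp only [h.1, h.2, mul_zero, sub_zero, mul_eq_zero, hq.ne', false_or] at h1 h2
    exact hv (Prod.ext h1 h2)
  calc _ = 3 * l * s ^ 2 + 2 * M * s * r + l * r ^ 2 := by
        simp only [l, q, s, M, r, minkowskiForm]; ring
    _ < 0 := quadratic_form_neg (by linarith) (by nlinarith) hsr

/-- Strict causality for the radiation fluid `p̃(θ) = θ⁴/3` in 1+1
dimensions: for every future non-spacelike covector `T = (T₀, T₁)` (`T₀ < 0`,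
`T₁² ≤ T₀²`) and every state `ψ` in the open future cone, the Hessian (with respect to
the fluid variables) of `ψ ↦ p̃(θ(ψ)) ψ^β T_β = ((ψ⁰)² - (ψ¹)²)^{-2}/3 · (ψ⁰T₀ + ψ¹T₁)`
is negative definite. (Negative definiteness of the Hessian in the raised variables
`ψ^α` is equivalent, by the congruence with `g = diag(-1,1)`, to condition (1.10) for
the Hessian in the lowered variables `ψ_α`.) -/
theorem stmt_19 (T0 T1 : ℝ) (hT0 : T0 < 0) (hT : T1 ^ 2 ≤ T0 ^ 2)
    (G : ℝ × ℝ → ℝ)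
    (hG : ∀ y : ℝ × ℝ, G y = (y.1 ^ 2 - y.2 ^ 2) ^ (-2 : ℤ) / 3 * (y.1 * T0 + y.2 * T1)) :
    ∀ ψ0 ψ1 : ℝ, |ψ1| < ψ0 → ∀ v : ℝ × ℝ, v ≠ 0 →
      fderiv ℝ (fun y => fderiv ℝ G y v) (ψ0, ψ1) v < 0 := by
  intro ψ0 ψ1 hψ v hv
  set ℓ : ℝ × ℝ →L[ℝ] ℝ := T0 • fst ℝ ℝ ℝ + T1 • snd ℝ ℝ ℝ
  have hGℓ : G = radiationPotential ℓ := by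
    funext y
    rw [hG, radiationPotential, show minkowskiForm y y = y.1 ^ 2 - y.2 ^ 2 by
      unfold minkowskiForm; ring]
    simp [ℓ, mul_comm]
  have hq := minkowskiForm_self_pos (x := (ψ0, ψ1)) hψ
  rw [hGℓ, fderiv_fderiv_radiationPotential_apply ℓ hq.ne' v]
  refine mul_neg_of_pos_of_neg (by positivity) ?_
  simpa [ℓ, mul_comm] using radiation_hessian_form_neg (x := (ψ0, ψ1)) hT0 hT hψ hv
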